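/- arXiv:math/0101206 — 4 statements merged into one kernel-verified Lean document; each statement's English description precedes it below -/
import Mathlib

section
/- Let V be a linear subspace of ℝ^m. Then every nonzero vector of V has both a strictly positive and a strictly negative coordinate if and only if there exists a vector w ∈ ℝ^m with all coordinates strictly positive which is orthogonal to V (with respect to the standard inner product). -/
/-!
If `w > 0` is orthogonal to `v ≠ 0`, the vanishing sum `∑ wᵢ vᵢ` forces `v` to have coordinates
of both signs. Conversely, a balanced subspace `V` misses the standard simplex, so the compact
simplex and the closed subspace `V` are strictly separated by a linear functional `f`. Being
bounded below on `V`, `f` vanishes there, so `f < 0` on the simplex, and `wᵢ := -f(eᵢ)` works.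
-/

open Finset

section

variable {ι : Type*} [Fintype ι]

theorem eq_zero_of_nonpos_of_sum_mul_eq_zero {w v : ι → ℝ} (hw : ∀ i, 0 < w i)
    (hv : ∀ i, v i ≤ 0) (h : ∑ i, w i * v i = 0) : v = 0 := by
  have hterms := (sum_eq_zero_iff_of_nonpos fun i _ ↦
    mul_nonpos_of_nonneg_of_nonpos (hw i).le (hv i)).mp h
  funext i
  exact (mul_eq_zero.mp (hterms i (mem_univ i))).resolve_left (hw i).ne'

theorem exists_pos_and_exists_neg_of_sum_mul_eq_zero {w v : ι → ℝ} (hw : ∀ i, 0 < w i)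
    (hv : v ≠ 0) (h : ∑ i, w i * v i = 0) : (∃ i, 0 < v i) ∧ ∃ i, v i < 0 := by
  constructor
  · by_contra! hnonpos
    exact hv (eq_zero_of_nonpos_of_sum_mul_eq_zero hw hnonpos h)
  · by_contra! hnonneg
    refine hv (neg_eq_zero.mp (eq_zero_of_nonpos_of_sum_mul_eq_zero hw (v := -v)
      (fun i ↦ neg_nonpos.mpr (hnonneg i)) ?_))
    simp only [Pi.neg_apply, mul_neg, sum_neg_distrib, h, neg_zero]

theorem disjoint_stdSimplex_of_forall_exists_neg {V : Submodule ℝ (ι → ℝ)}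
    (hV : ∀ v ∈ V, v ≠ 0 → ∃ i, v i < 0) : Disjoint (stdSimplex ℝ ι) V := by
  refine Set.disjoint_left.mpr fun x ⟨hx_nonneg, hx_sum⟩ hxV ↦ ?_
  have hx : x ≠ 0 := by
    rintro rfl
    simp at hx_sum
  obtain ⟨i, hi⟩ := hV x hxV hx
  exact (hx_nonneg i).not_gt hi

end

theorem LinearMap.eq_zero_of_forall_lt_of_mem {𝕜 E : Type*} [Field 𝕜] [LinearOrder 𝕜]
    [IsStrictOrderedRing 𝕜] [AddCommGroup E] [Module 𝕜 E] (f : E →ₗ[𝕜] 𝕜) {V : Submodule 𝕜 E}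
    {c : 𝕜} (h : ∀ x ∈ V, c < f x) {x : E} (hx : x ∈ V) : f x = 0 := by
  by_contra hfx
  have := h _ (V.smul_mem ((c - 1) / f x) hx)
  rw [map_smul, smul_eq_mul, div_mul_cancel₀ _ hfx] at this
  linarith

theorem exists_pos_orthogonal_of_disjoint_stdSimplex {ι : Type*} [Fintype ι]
    {V : Submodule ℝ (ι → ℝ)} (hV : Disjoint (stdSimplex ℝ ι) V) :
    ∃ w : ι → ℝ, (∀ i, 0 < w i) ∧ ∀ v ∈ V, ∑ i, w i * v i = 0 := by
  classical
  obtain ⟨f, u, c, hf_simplex, huc, hf_V⟩ :=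
    geometric_hahn_banach_compact_closed (convex_stdSimplex ℝ ι) (isCompact_stdSimplex ℝ ι)
      V.convex V.closed_of_finiteDimensional hV
  have hf_zero : ∀ v ∈ V, f v = 0 := fun v hv ↦
    (f : (ι → ℝ) →ₗ[ℝ] ℝ).eq_zero_of_forall_lt_of_mem hf_V hv
  have hc : c < 0 := by simpa using hf_V 0 V.zero_mem
  refine ⟨fun i ↦ -f (if i = · then 1 else 0), fun i ↦ ?_, fun v hv ↦ ?_⟩
  · linarith [hf_simplex _ (ite_eq_mem_stdSimplex ℝ i)]
  · have hfv := (f : (ι → ℝ) →ₗ[ℝ] ℝ).pi_apply_eq_sum_univ v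
    simp only [ContinuousLinearMap.coe_coe, smul_eq_mul, hf_zero v hv] at hfv
    simp only [neg_mul, sum_neg_distrib, neg_eq_zero]
    simpa only [mul_comm] using hfv.symm

/-- A subspace `V ⊆ ℝ^m` has the property that every nonzero vector has both a
strictly positive and a strictly negative coordinate ("balanced") if and only if
there is a vector with all coordinates strictly positive orthogonal to `V`. -/
theorem balanced_iff_exists_positive_orthogonal (m : ℕ) (V : Submodule ℝ (Fin m → ℝ)) :
    (∀ v ∈ V, v ≠ 0 → (∃ i, 0 < v i) ∧ (∃ i, v i < 0)) ↔
    (∃ w : Fin m → ℝ, (∀ i, 0 < w i) ∧ ∀ v ∈ V, ∑ i, w i * v i = 0) := by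
  constructor
  · intro hV
    exact exists_pos_orthogonal_of_disjoint_stdSimplex
      (disjoint_stdSimplex_of_forall_exists_neg fun v hv hv0 ↦ (hV v hv hv0).2)
  · rintro ⟨w, hw, hw_orth⟩ v hv hv0
    exact exists_pos_and_exists_neg_of_sum_mul_eq_zero hw hv0 (hw_orth v hv)
end

section
/- Let P ⊆ ℝ^m be a linear subspace such that the only vector p ∈ P with all coordinates ≥ 0 is the zero vector. Then for every c ∈ ℝ^m, the set { p ∈ P ∩ ℤ^m : p_i ≥ c_i for all i } is finite. -/
/-- If the only vector in the subspace `P ⊆ ℝ^m` with all coordinates nonnegative is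
zero, then for every `c ∈ ℝ^m` the set of lattice points of `P` bounded below
componentwise by `c` is finite. -/
theorem finite_lattice_points_of_no_nonneg_vector (m : ℕ) (P : Submodule ℝ (Fin m → ℝ))
    (hP : ∀ p ∈ P, (∀ i, 0 ≤ p i) → p = 0) :
    ∀ c : Fin m → ℝ,
      {p : Fin m → ℝ | p ∈ P ∧ (∀ i, ∃ z : ℤ, p i = (z : ℝ)) ∧ ∀ i, c i ≤ p i}.Finite := by
  intro c
  rcases Nat.eq_zero_or_pos m with hm | hm
  · subst hm
    exact Set.Finite.subset (Set.finite_singleton 0)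
      (fun p _ => by simp [Subsingleton.elim p 0])
  haveI : Nonempty (Fin m) := ⟨⟨0, hm⟩⟩
  set K : Set (Fin m → ℝ) := Metric.sphere 0 1 ∩ (P : Set (Fin m → ℝ)) with hKdef
  have hKc : IsCompact K :=
    (isCompact_sphere 0 1).inter_right P.closed_of_finiteDimensional
  obtain ⟨ε, hε, hKε⟩ : ∃ ε > 0, ∀ q ∈ K, ∃ i, q i ≤ -ε := by
    rcases K.eq_empty_or_nonempty with h | h
    · exact ⟨1, one_pos, by simp [h]⟩
    · have hf : Continuous (fun q : Fin m → ℝ =>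
          Finset.univ.inf' Finset.univ_nonempty (fun i => q i)) :=
        Continuous.finset_inf'_apply _ (fun i _ => continuous_apply i)
      obtain ⟨q₀, hq₀K, hmax⟩ := hKc.exists_isMaxOn h hf.continuousOn
      have hneg : Finset.univ.inf' Finset.univ_nonempty (fun i => q₀ i) < 0 := by
        by_contra h'
        push_neg at h'
        have hz : q₀ = 0 := hP q₀ hq₀K.2
          (fun i => le_trans h' (Finset.inf'_le _ (Finset.mem_univ i)))
        have : ‖q₀‖ = 1 := by simpa using hq₀K.1
        rw [hz] at this; simp at this
      refine ⟨-(Finset.univ.inf' Finset.univ_nonempty (fun i => q₀ i)),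
        by linarith, fun q hq => ?_⟩
      obtain ⟨i, _, hi⟩ := Finset.exists_mem_eq_inf' Finset.univ_nonempty (fun i => q i)
      refine ⟨i, ?_⟩
      rw [neg_neg, ← hi]
      exact hmax hq
  -- bound on norms
  set R : ℝ := ‖c‖ / ε with hR
  have hbound : ∀ p ∈ {p : Fin m → ℝ | p ∈ P ∧ (∀ i, ∃ z : ℤ, p i = (z : ℝ)) ∧
      ∀ i, c i ≤ p i}, ‖p‖ ≤ R := by
    rintro p ⟨hpP, _, hpc⟩
    rcases eq_or_ne p 0 with rfl | hp0
    · simp [hR]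
      positivity
    · have hnp : (0:ℝ) < ‖p‖ := norm_pos_iff.mpr hp0
      have hqK : (‖p‖⁻¹ • p) ∈ K := by
        constructor
        · simp [norm_smul, abs_of_pos (inv_pos.mpr hnp), inv_mul_cancel₀ hnp.ne']
        · exact P.smul_mem _ hpP
      obtain ⟨i, hi⟩ := hKε _ hqK
      have hi'' : ‖p‖⁻¹ * p i ≤ -ε := by simpa [smul_eq_mul] using hi
      have hi' : p i ≤ -ε * ‖p‖ := by
        have h := mul_le_mul_of_nonneg_left hi'' hnp.le
        rw [← mul_assoc, mul_inv_cancel₀ hnp.ne', one_mul] at h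
        linarith [h, mul_comm ‖p‖ (-ε)]
      have h1 : ε * ‖p‖ ≤ -c i := by
        have := hpc i
        nlinarith
      have h2 : -c i ≤ ‖c‖ := by
        have := norm_le_pi_norm c i
        rw [Real.norm_eq_abs] at this
        cases abs_le.mp this with
        | intro a b => linarith
      rw [hR, le_div_iff₀ hε]
      nlinarith
  -- finiteness from the bound
  set N : ℤ := ⌈R⌉ with hN
  have hsub : {p : Fin m → ℝ | p ∈ P ∧ (∀ i, ∃ z : ℤ, p i = (z : ℝ)) ∧ ∀ i, c i ≤ p i} ⊆
      (fun z : Fin m → ℤ => fun i => (z i : ℝ)) ''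
        ↑(Fintype.piFinset (fun _ : Fin m => Finset.Icc (-N) N)) := by
    rintro p hp
    obtain ⟨hpP, hpz, hpc⟩ := hp
    choose z hz using hpz
    refine ⟨z, ?_, by funext i; exact (hz i).symm⟩
    simp only [Finset.coe_sort_coe, Fintype.mem_piFinset, Finset.mem_Icc, Set.mem_setOf_eq,
      Finset.mem_coe]
    intro i
    have h1 : |p i| ≤ R := le_trans (by simpa using norm_le_pi_norm p i)
      (hbound p ⟨hpP, fun i => ⟨z i, hz i⟩, hpc⟩)
    have h2 : |(z i : ℝ)| ≤ (N : ℝ) := by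
      rw [← hz i]; exact h1.trans (Int.le_ceil R)
    rw [abs_le] at h2
    constructor
    · exact_mod_cast (by push_cast; linarith : ((-N : ℤ) : ℝ) ≤ (z i : ℝ))
    · exact_mod_cast h2.2
  exact Set.Finite.subset (Set.Finite.image _ (Finset.finite_toSet _)) hsub
end

section
/- Let A, B, C be modules over ℤ[U] and suppose there are ℤ[U]-module homomorphisms i : A → B, π : B → C, ∂ : C → A forming an exact sequence … → A →ⁱ B →^π C →^∂ A →ⁱ B → … (exact at every spot). Assume multiplication by U is bijective on B, and suppose k is such that Ker(U^k : A → A) = Ker(i). Then Im(U^k : C → C) = Im(π). -/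
/-!
`U^k` commutes with every `ℤ[U]`-linear map. Going around the triangle,
`∂ (U^k c) = U^k (∂ c)` vanishes because `∂ c ∈ Im ∂ = Ker i = Ker U^k`, so
`U^k c ∈ Ker ∂ = Im π`. Conversely, `U` is onto on `B`, so every `π b` is
`π (U^k b') = U^k (π b')`.
-/

/-- Multiplication by the variable `U` on a module over `ℤ[U]`. -/
noncomputable def Umul (M : Type*) [AddCommGroup M] [Module (Polynomial ℤ) M] :
    M →ₗ[Polynomial ℤ] M :=
  LinearMap.lsmul (Polynomial ℤ) M Polynomial.X

namespace LinearMap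

variable {R M N : Type*} [Semiring R] [AddCommMonoid M] [AddCommMonoid N] [Module R M] [Module R N]

theorem range_le_ker_of_comp_eq {d : M →ₗ[R] N} {f : M →ₗ[R] M} {g : N →ₗ[R] N}
    (hcomm : d ∘ₗ f = g ∘ₗ d) (hd : range d ≤ ker g) : range f ≤ ker d := by
  rintro _ ⟨x, rfl⟩
  rw [mem_ker, ← comp_apply, hcomm, comp_apply]
  exact hd (mem_range_self d x)

theorem range_le_range_of_comp_eq {p : M →ₗ[R] N} {f : N →ₗ[R] N} {g : M →ₗ[R] M}
    (hcomm : p ∘ₗ g = f ∘ₗ p) (hg : Function.Surjective g) : range p ≤ range f := by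
  rintro _ ⟨x, rfl⟩
  obtain ⟨y, rfl⟩ := hg x
  exact ⟨p y, by rw [← comp_apply, ← hcomm, comp_apply]⟩

end LinearMap

section Umul

variable {M N : Type*} [AddCommGroup M] [Module (Polynomial ℤ) M]
  [AddCommGroup N] [Module (Polynomial ℤ) N]

theorem Umul_pow_apply (k : ℕ) (x : M) :
    (Umul M ^ k) x = (Polynomial.X ^ k : Polynomial ℤ) • x := by
  induction k with
  | zero => simp
  | succ n ih => rw [pow_succ', Module.End.mul_apply, ih, pow_succ', mul_smul]; rfl

theorem comp_Umul_pow (f : M →ₗ[Polynomial ℤ] N) (k : ℕ) :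
    f ∘ₗ (Umul M ^ k) = (Umul N ^ k) ∘ₗ f := by
  ext x
  simp only [LinearMap.comp_apply, Umul_pow_apply, map_smul]

end Umul

theorem range_pow_eq_range_of_exact_triangle_general
    (A B C : Type*) [AddCommGroup A] [Module (Polynomial ℤ) A]
    [AddCommGroup B] [Module (Polynomial ℤ) B] [AddCommGroup C] [Module (Polynomial ℤ) C]
    (i : A →ₗ[Polynomial ℤ] B) (p : B →ₗ[Polynomial ℤ] C) (d : C →ₗ[Polynomial ℤ] A)
    (h2 : Function.Exact p d) (h3 : Function.Exact d i)
    (hUB : Function.Bijective (Umul B))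
    (k : ℕ) (hk : LinearMap.ker ((Umul A) ^ k) = LinearMap.ker i) :
    LinearMap.range ((Umul C) ^ k) = LinearMap.range p := by
  apply le_antisymm
  · rw [← h2.linearMap_ker_eq]
    exact LinearMap.range_le_ker_of_comp_eq (comp_Umul_pow d k)
      (by rw [hk, h3.linearMap_ker_eq])
  · have hUBk : Function.Surjective (Umul B ^ k) := by
      rw [Module.End.coe_pow]
      exact hUB.surjective.iterate k
    exact LinearMap.range_le_range_of_comp_eq (comp_Umul_pow p k) hUBk

/-- In an exact triangle `… → A → B → C → A → …` of `ℤ[U]`-modules with `U`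
bijective on `B`, if `Ker(U^k : A → A) = Ker i` then `Im(U^k : C → C) = Im π`. -/
theorem range_pow_eq_range_of_exact_triangle
    (A B C : Type*) [AddCommGroup A] [Module (Polynomial ℤ) A]
    [AddCommGroup B] [Module (Polynomial ℤ) B] [AddCommGroup C] [Module (Polynomial ℤ) C]
    (i : A →ₗ[Polynomial ℤ] B) (p : B →ₗ[Polynomial ℤ] C) (d : C →ₗ[Polynomial ℤ] A)
    (h1 : Function.Exact i p) (h2 : Function.Exact p d) (h3 : Function.Exact d i)
    (hUB : Function.Bijective (Umul B))
    (k : ℕ) (hk : LinearMap.ker ((Umul A) ^ k) = LinearMap.ker i) :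
    LinearMap.range ((Umul C) ^ k) = LinearMap.range p :=
  range_pow_eq_range_of_exact_triangle_general A B C i p d h2 h3 hUB k hk
end

section
/- Let X be a Banach space, ε > 0 and c > 0 constants, and N : B_ε(0) → X a map with N(0) = 0 satisfying ‖N(x) − N(y)‖ ≤ c ‖x − y‖ (‖x‖ + ‖y‖) for all x, y in the closed ball of radius ε. Then for every e ∈ X with ‖e‖ ≤ min(ε/2, 1/(8c)), there exists a unique η ∈ X with ‖η‖ ≤ 2‖e‖ solving η + N(η) = e. -/
/-- Quantitative Newton-iteration lemma: if `N` vanishes at `0` and is quadratically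
contracting on the closed `ε`-ball, then for every sufficiently small `e` the
equation `η + N(η) = e` has a unique solution `η` with `‖η‖ ≤ 2‖e‖`. -/
theorem newton_iteration_unique_solution
    (X : Type*) [NormedAddCommGroup X] [NormedSpace ℝ X] [CompleteSpace X]
    (ε c : ℝ) (hε : 0 < ε) (hc : 0 < c) (N : X → X) (hN0 : N 0 = 0)
    (hquad : ∀ x y : X, ‖x‖ ≤ ε → ‖y‖ ≤ ε → ‖N x - N y‖ ≤ c * ‖x - y‖ * (‖x‖ + ‖y‖)) :
    ∀ e : X, ‖e‖ ≤ min (ε / 2) (1 / (8 * c)) →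
      ∃! η : X, ‖η‖ ≤ 2 * ‖e‖ ∧ η + N η = e := by
  intro e he
  have he1 : ‖e‖ ≤ ε / 2 := le_trans he (min_le_left _ _)
  have he2 : ‖e‖ ≤ 1 / (8 * c) := le_trans he (min_le_right _ _)
  have he2' : 8 * c * ‖e‖ ≤ 1 := by
    rw [le_div_iff₀ (by positivity)] at he2; linarith
  set r : ℝ := 2 * ‖e‖ with hr
  have hr0 : 0 ≤ r := by positivity
  have hrε : r ≤ ε := by simp only [hr]; linarith
  -- norm of N x for x in the ball
  have hNnorm : ∀ x : X, ‖x‖ ≤ r → ‖N x‖ ≤ ‖e‖ := by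
    intro x hx
    have h := hquad x 0 (le_trans hx hrε) (by simpa using hε.le)
    simp only [hN0, sub_zero, norm_zero, add_zero] at h
    calc ‖N x‖ ≤ c * ‖x‖ * ‖x‖ := h
      _ ≤ c * r * r := by
          apply mul_le_mul (mul_le_mul_of_nonneg_left hx hc.le) hx (norm_nonneg _)
          positivity
      _ = (4 * c * ‖e‖) * ‖e‖ := by ring
      _ ≤ (1/2 : ℝ) * ‖e‖ := by
          apply mul_le_mul_of_nonneg_right _ (norm_nonneg _); linarith
      _ ≤ ‖e‖ := by linarith [norm_nonneg e]
  -- contraction estimate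
  have hcontr : ∀ x y : X, ‖x‖ ≤ r → ‖y‖ ≤ r →
      ‖N x - N y‖ ≤ (1/2 : ℝ) * ‖x - y‖ := by
    intro x y hx hy
    calc ‖N x - N y‖ ≤ c * ‖x - y‖ * (‖x‖ + ‖y‖) :=
          hquad x y (le_trans hx hrε) (le_trans hy hrε)
      _ ≤ c * ‖x - y‖ * (r + r) := by
          apply mul_le_mul_of_nonneg_left (add_le_add hx hy) (by positivity)
      _ = (8 * c * ‖e‖) * (1/2 * ‖x - y‖) := by ring
      _ ≤ 1 * (1/2 * ‖x - y‖) := by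
          apply mul_le_mul_of_nonneg_right he2' (by positivity)
      _ = (1/2 : ℝ) * ‖x - y‖ := by ring
  -- set up the contraction on the closed ball
  set S := Metric.closedBall (0 : X) r with hS
  have hmem : ∀ x : X, x ∈ S ↔ ‖x‖ ≤ r := by
    intro x; simp [hS, Metric.mem_closedBall, dist_zero_right]
  haveI : CompleteSpace S := (Metric.isClosed_closedBall).completeSpace_coe
  have hmapsto : ∀ x : X, ‖x‖ ≤ r → ‖e - N x‖ ≤ r := by
    intro x hx
    calc ‖e - N x‖ ≤ ‖e‖ + ‖N x‖ := norm_sub_le _ _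
      _ ≤ ‖e‖ + ‖e‖ := by linarith [hNnorm x hx]
      _ = r := by ring
  let T : S → S := fun x => ⟨e - N x, (hmem _).2 (hmapsto x ((hmem _).1 x.2))⟩
  have hT : ContractingWith (1/2 : NNReal) T := by
    constructor
    · rw [← NNReal.coe_lt_one]; norm_num
    · intro x y
      rw [edist_dist, edist_dist, Subtype.dist_eq, Subtype.dist_eq]
      have hd : dist (e - N (x : X)) (e - N (y : X)) ≤ (1/2 : ℝ) * dist (x : X) y := by
        rw [dist_eq_norm, dist_eq_norm]
        have : (e - N (x : X)) - (e - N (y : X)) = -(N x - N y) := by abel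
        rw [this, norm_neg]
        exact hcontr x y ((hmem _).1 x.2) ((hmem _).1 y.2)
      calc ENNReal.ofReal (dist (T x : X) (T y : X))
            ≤ ENNReal.ofReal ((1/2 : ℝ) * dist (x : X) y) := ENNReal.ofReal_le_ofReal hd
        _ = (1/2 : NNReal) * ENNReal.ofReal (dist (x : X) y) := by
            rw [ENNReal.ofReal_mul (by norm_num), ENNReal.ofReal]
            congr 2
            rw [← NNReal.coe_inj, Real.coe_toNNReal _ (by norm_num)]
            norm_num
  haveI : Nonempty S := ⟨⟨0, (hmem _).2 (by simpa using hr0)⟩⟩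
  set η : S := ContractingWith.fixedPoint T hT with hηdef
  have hηfix : T η = η := hT.fixedPoint_isFixedPt
  have hηsol : (η : X) + N η = e := by
    have h : e - N (η : X) = (η : X) := congrArg Subtype.val hηfix
    exact (sub_eq_iff_eq_add.mp h).symm
  refine ⟨(η : X), ⟨(hmem _).1 η.2, hηsol⟩, ?_⟩
  rintro y ⟨hy1, hy2⟩
  -- uniqueness
  have hdiff : ‖y - (η : X)‖ ≤ (1/2 : ℝ) * ‖y - (η : X)‖ := by
    have h1 : y - (η : X) = N (η : X) - N y := by
      rw [sub_eq_sub_iff_add_eq_add, hy2, ← hηsol]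
      exact add_comm _ _
    calc ‖y - (η : X)‖ = ‖N (η : X) - N y‖ := by rw [h1]
      _ ≤ (1/2 : ℝ) * ‖(η : X) - y‖ := hcontr _ _ ((hmem _).1 η.2) hy1
      _ = (1/2 : ℝ) * ‖y - (η : X)‖ := by rw [norm_sub_rev]
  have : ‖y - (η : X)‖ ≤ 0 := by linarith
  have hz : y - (η : X) = 0 :=
    norm_eq_zero.mp (le_antisymm this (norm_nonneg _))
  exact sub_eq_zero.mp hz
end
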